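/- Let Y be a nonempty finite type and let f, g : Y → ℝ be two score functions with |f(y) − g(y)| ≤ ε for every y ∈ Y, where ε ≥ 0. Let p_f and p_g be the associated softmax distributions, p_f(y) = exp(f(y)) / ∑_{y'} exp(f(y')) and p_g(y) = exp(g(y)) / ∑_{y'} exp(g(y')). Then the Kullback–Leibler divergence from p_g to p_f is bounded by twice the sup-norm score gap: D_KL(p_f ‖ p_g) = ∑_{y ∈ Y} p_f(y) · log(p_f(y)/p_g(y)) ≤ 2ε. -/

import Mathlib

/-!
Since `log p_f(y) = f(y) - log ∑ exp f` and log-sum-exp moves by at most `ε` when the scores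
move by at most `ε`, every log-ratio `log (p_f(y) / p_g(y))` is at most `2ε`; the divergence is a
`p_f`-weighted average of these log-ratios.
-/

open Finset

/-- The softmax distribution associated to a score function `f : Y → ℝ`. -/
noncomputable def softmax {Y : Type*} [Fintype Y] (f : Y → ℝ) (y : Y) : ℝ :=
  Real.exp (f y) / ∑ y' : Y, Real.exp (f y')

section Softmax

variable {Y : Type*} [Fintype Y] [Nonempty Y]

lemma sum_exp_pos (f : Y → ℝ) : 0 < ∑ y, Real.exp (f y) :=
  sum_pos (fun y _ => Real.exp_pos (f y)) univ_nonempty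

lemma softmax_pos (f : Y → ℝ) (y : Y) : 0 < softmax f y :=
  div_pos (Real.exp_pos (f y)) (sum_exp_pos f)

lemma sum_softmax (f : Y → ℝ) : ∑ y, softmax f y = 1 := by
  simp only [softmax]
  rw [← sum_div, div_self (sum_exp_pos f).ne']

lemma log_softmax (f : Y → ℝ) (y : Y) :
    Real.log (softmax f y) = f y - Real.log (∑ y', Real.exp (f y')) := by
  rw [softmax, Real.log_div (Real.exp_pos _).ne' (sum_exp_pos f).ne', Real.log_exp]

lemma log_sum_exp_le_add {f g : Y → ℝ} {ε : ℝ} (h : ∀ y, g y ≤ f y + ε) :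
    Real.log (∑ y, Real.exp (g y)) ≤ Real.log (∑ y, Real.exp (f y)) + ε := by
  have hle : ∑ y, Real.exp (g y) ≤ Real.exp ε * ∑ y, Real.exp (f y) := by
    rw [mul_sum]
    refine sum_le_sum fun y _ => ?_
    rw [← Real.exp_add]
    exact Real.exp_le_exp.mpr (by linarith [h y])
  calc Real.log (∑ y, Real.exp (g y))
      ≤ Real.log (Real.exp ε * ∑ y, Real.exp (f y)) := Real.log_le_log (sum_exp_pos g) hle
    _ = Real.log (∑ y, Real.exp (f y)) + ε := by
      rw [Real.log_mul (Real.exp_pos ε).ne' (sum_exp_pos f).ne', Real.log_exp, add_comm]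

lemma log_softmax_div_softmax_le {f g : Y → ℝ} {ε : ℝ} (h : ∀ y, |f y - g y| ≤ ε) (y : Y) :
    Real.log (softmax f y / softmax g y) ≤ 2 * ε := by
  have hgf := log_sum_exp_le_add (f := f) (g := g) fun y => by
    linarith [(abs_le.mp (h y)).1]
  rw [Real.log_div (softmax_pos f y).ne' (softmax_pos g y).ne', log_softmax, log_softmax]
  linarith [(abs_le.mp (h y)).2]

end Softmax

theorem klDiv_softmax_le_two_eps_general {Y : Type*} [Fintype Y] [Nonempty Y]
    (f g : Y → ℝ) (ε : ℝ) (h : ∀ y : Y, |f y - g y| ≤ ε) :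
    ∑ y : Y, softmax f y * Real.log (softmax f y / softmax g y) ≤ 2 * ε :=
  (convex_Iic (2 * ε)).sum_mem (fun y _ => (softmax_pos f y).le) (sum_softmax f)
    fun y _ => log_softmax_div_softmax_le h y

/-- If two score functions `f, g` satisfy `|f y - g y| ≤ ε` for all `y`, then the
Kullback–Leibler divergence from the softmax of `g` to the softmax of `f` is at most `2 ε`. -/
theorem klDiv_softmax_le_two_eps {Y : Type*} [Fintype Y] [Nonempty Y]
    (f g : Y → ℝ) (ε : ℝ) (hε : 0 ≤ ε) (h : ∀ y : Y, |f y - g y| ≤ ε) :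
    ∑ y : Y, softmax f y * Real.log (softmax f y / softmax g y) ≤ 2 * ε :=
  klDiv_softmax_le_two_eps_general f g ε h
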